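/- arXiv:0805.1863 — 2 statements merged into one kernel-verified Lean document; each statement's English description precedes it below -/
import Mathlib

section
/- Suppose 𝔼_k(T_0) < ∞ for every k ∈ ℕ, and let μ (the law of Z_∞) be the common limiting distribution of the chain. Then there exists A > 0 such that for all n, k ∈ ℕ: Σ_{l∈ℕ} |ℙ_k(Z_n = l) − μ({l})| ≤ A·[ sup{ |u_l − u_∞| : ⌊n/2⌋ ≤ l ≤ n } + 𝔼_0(T_0·1_{T_0 > n/4}) + 𝔼_k(T_0·1_{T_0 > n/4}) ]. -/
open MeasureTheory Filter ENNReal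

noncomputable section

/-- A time-homogeneous Markov chain with values in `ℕ`, encoded by its family of path laws
`ℙ k` on `ℕ → ℕ` (law started from `k`) together with one-step transition probabilities `p`,
the finite-dimensional distributions being the usual products of transition probabilities. -/
structure MCNat where
  /-- transition probabilities -/
  p : ℕ → ℕ → ℝ≥0∞
  p_sum : ∀ x, ∑' y, p x y = 1
  /-- law of the chain started from `k`, on path space -/
  ℙ : ℕ → Measure (ℕ → ℕ)
  prob : ∀ k, IsProbabilityMeasure (ℙ k)
  fdd : ∀ (k n : ℕ) (path : ℕ → ℕ),
    ℙ k {ω | ∀ i ≤ n, ω i = path i} =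
      if path 0 = k then ∏ i ∈ Finset.range n, p (path i) (path (i + 1)) else 0

/-- `T₀`, the first time after time `0` at which the path hits `0` (with value `∞` if the path
never returns to `0`), viewed in `ℝ≥0∞`. -/
def T0 (ω : ℕ → ℕ) : ℝ≥0∞ := sInf {t : ℝ≥0∞ | ∃ i : ℕ, 0 < i ∧ ω i = 0 ∧ t = i}

/-- `𝔼_k(T₀)`. -/
def ET0 (M : MCNat) (k : ℕ) : ℝ≥0∞ := ∫⁻ ω, T0 ω ∂(M.ℙ k)

/-- `u_n = ℙ_0(Z_n = 0)`. -/
def u (M : MCNat) (n : ℕ) : ℝ≥0∞ := M.ℙ 0 {ω | ω n = 0}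

/-- `u_∞ = 1 / 𝔼_0(T₀)`, with the convention `1/∞ = 0`. -/
def uinf (M : MCNat) : ℝ≥0∞ := (ET0 M 0)⁻¹

/-- `𝔼_k(T₀ · 1_{T₀ > t})`, as a real number. -/
def ET0trunc (M : MCNat) (k : ℕ) (t : ℝ≥0∞) : ℝ :=
  (∫⁻ ω in {ω | t < T0 ω}, T0 ω ∂(M.ℙ k)).toReal

/-!
Split a path started at `k` at its first return to `0`, and a path started at `0` at its last
visit to `0` up to a given time; by the Markov property, with `f_j = ℙ_k(T₀ = j + 1)` and
`g_s(l) = ℙ₀(Z_s = l, T₀ > s)`,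
`ℙ_k(Z_n = l) = ∑_{j + s < n} f_j g_s(l) u_{n-1-j-s} + ℙ_k(Z_n = l, T₀ > n)`.
Letting `n → ∞` under dominated convergence gives `μ{l} = u_∞ ∑_s g_s(l)`, and as `∑_j f_j = 1`,
`μ{l} = ∑_{j, s} f_j g_s(l) u_∞`. Summing over `l` turns `g_s(l)` into `ℙ₀(T₀ > s)`, whose sum is
`𝔼₀(T₀)`. For `j < n/4` and `s ≤ n/4` the index `n-1-j-s` lies in `[n/2, n]`, so those terms are
controlled by `sup |u_l - u_∞|`; all other terms have `j ≥ n/4` or `s > n/4` and are tails bounded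
by `𝔼_k(T₀; T₀ > n/4)` and `𝔼₀(T₀; T₀ > n/4)`.
-/

lemma tsum_measure_inter_preimage_singleton {Ω : Type*} [MeasurableSpace Ω] (P : Measure Ω)
    {X : Ω → ℕ} (hX : Measurable X) {A : Set Ω} (hA : MeasurableSet A) :
    ∑' l, P (A ∩ X ⁻¹' {l}) = P A := by
  rw [← measure_iUnion (fun l l' hne => (Set.disjoint_singleton.2 hne).preimage X |>.mono
      Set.inter_subset_right Set.inter_subset_right)
    fun l => hA.inter (hX (measurableSet_singleton l)), ← Set.inter_iUnion,
    ← Set.preimage_iUnion, Set.iUnion_singleton_eq_range, Set.range_id', Set.preimage_univ,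
    Set.inter_univ]

lemma ENNReal.tendsto_tsum_of_dominated_convergence {F : ℕ → ℕ → ℝ≥0∞} {f bound : ℕ → ℝ≥0∞}
    (h_bound : ∀ n i, F n i ≤ bound i) (h_fin : ∑' i, bound i ≠ ⊤)
    (h_lim : ∀ i, Tendsto (F · i) atTop (nhds (f i))) :
    Tendsto (fun n => ∑' i, F n i) atTop (nhds (∑' i, f i)) := by
  simp_rw [← lintegral_count]
  exact tendsto_lintegral_of_dominated_convergence bound (fun _ => measurable_from_top)
    (fun n => Eventually.of_forall (h_bound n)) (by rwa [lintegral_count])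
    (Eventually.of_forall h_lim)

/-- `|x - y|` on `ℝ≥0∞`, where at most one of the two truncated differences is nonzero. -/
def absDiff (x y : ℝ≥0∞) : ℝ≥0∞ := x - y + (y - x)

lemma absDiff_le_max (x y : ℝ≥0∞) : absDiff x y ≤ max x y := by
  rcases le_total x y with h | h
  · rw [absDiff, tsub_eq_zero_of_le h, zero_add]; exact tsub_le_self.trans (le_max_right x y)
  · rw [absDiff, tsub_eq_zero_of_le h, add_zero]; exact tsub_le_self.trans (le_max_left x y)

lemma absDiff_eq_ofReal {x y : ℝ≥0∞} (hx : x ≠ ⊤) (hy : y ≠ ⊤) :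
    absDiff x y = ENNReal.ofReal |x.toReal - y.toReal| := by
  rcases le_total x y with h | h
  · rw [absDiff, tsub_eq_zero_of_le h, zero_add, abs_sub_comm,
      abs_of_nonneg (sub_nonneg.2 (toReal_mono hy h)), ← toReal_sub_of_le h hy,
      ofReal_toReal (ne_top_of_le_ne_top hy tsub_le_self)]
  · rw [absDiff, tsub_eq_zero_of_le h, add_zero,
      abs_of_nonneg (sub_nonneg.2 (toReal_mono hx h)), ← toReal_sub_of_le h hx,
      ofReal_toReal (ne_top_of_le_ne_top hx tsub_le_self)]

lemma absDiff_add_le (x r y : ℝ≥0∞) : absDiff (x + r) y ≤ absDiff x y + r := by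
  calc absDiff (x + r) y ≤ (x - y + r) + (y - x) :=
        add_le_add add_tsub_le_tsub_add (tsub_le_tsub_left le_self_add y)
    _ = absDiff x y + r := by rw [absDiff]; ring

lemma absDiff_mul_left_le (a x y : ℝ≥0∞) : absDiff (a * x) (a * y) ≤ a * absDiff x y := by
  rw [absDiff, absDiff, mul_add]
  exact add_le_add le_mul_tsub le_mul_tsub

lemma absDiff_tsum_le {ι : Type*} (F G : ι → ℝ≥0∞) :
    absDiff (∑' i, F i) (∑' i, G i) ≤ ∑' i, absDiff (F i) (G i) := by
  have h : ∀ F G : ι → ℝ≥0∞, (∑' i, F i) - ∑' i, G i ≤ ∑' i, (F i - G i) := fun F G => by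
    rw [tsub_le_iff_right, ← ENNReal.tsum_add]
    exact ENNReal.tsum_le_tsum fun i => le_tsub_add
  simp only [absDiff, ENNReal.tsum_add]
  exact add_le_add (h F G) (h G F)

lemma tsum_abs_toReal_sub_eq {ι : Type*} {F G : ι → ℝ≥0∞} (hF : ∀ i, F i ≠ ⊤) (hG : ∀ i, G i ≠ ⊤) :
    ∑' i, |(F i).toReal - (G i).toReal| = (∑' i, absDiff (F i) (G i)).toReal := by
  simp_rw [absDiff_eq_ofReal (hF _) (hG _)]
  rw [ENNReal.tsum_toReal_eq fun _ => ofReal_ne_top]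
  simp_rw [toReal_ofReal (abs_nonneg _)]

lemma tsum_tsum_mul_mul_le (F G : ℕ → ℝ≥0∞) (c : ℕ → ℕ → ℝ≥0∞) {S : ℝ≥0∞} {m : ℕ}
    (hc : ∀ j s, c j s ≤ 1) (hcS : ∀ j s, j < m → s ≤ m → c j s ≤ S) :
    ∑' j, ∑' s, F j * G s * c j s ≤ (∑' j, F j) * (∑' s, G s) * S +
      (∑' j, if m ≤ j then F j else 0) * (∑' s, G s) +
      (∑' j, F j) * ∑' s, if m < s then G s else 0 := by
  have h : ∀ j s, F j * G s * c j s ≤ F j * G s * S + (if m ≤ j then F j else 0) * G s +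
      F j * (if m < s then G s else 0) := fun j s => by
    by_cases hj : m ≤ j
    · rw [if_pos hj]
      exact le_add_right (le_add_left (mul_le_of_le_one_right zero_le (hc j s)))
    by_cases hs : m < s
    · rw [if_pos hs]
      exact le_add_left (mul_le_of_le_one_right zero_le (hc j s))
    exact le_add_right (le_add_right (by gcongr; exact hcS j s (by omega) (by omega)))
  refine (ENNReal.tsum_le_tsum fun j => ENNReal.tsum_le_tsum (h j)).trans_eq ?_
  simp only [ENNReal.tsum_add, ENNReal.tsum_mul_left, ENNReal.tsum_mul_right]

namespace PathSpace

def cyl (n : ℕ) (q : ℕ → ℕ) : Set (ℕ → ℕ) := {ω | ∀ i ≤ n, ω i = q i}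

/-- Every cylinder of level `n` is `cyl n (ofFin n v)` for exactly one `v`. -/
def ofFin (n : ℕ) (v : Fin (n + 1) → ℕ) : ℕ → ℕ := fun i => if h : i < n + 1 then v ⟨i, h⟩ else 0

def DeterminedUpTo (n : ℕ) (E : Set (ℕ → ℕ)) : Prop :=
  ∀ ω ω' : ℕ → ℕ, (∀ i ≤ n, ω i = ω' i) → ω ∈ E → ω' ∈ E

lemma ofFin_apply {n : ℕ} (v : Fin (n + 1) → ℕ) {i : ℕ} (hi : i ≤ n) :
    ofFin n v i = v ⟨i, Nat.lt_succ_of_le hi⟩ := by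
  simp [ofFin, Nat.lt_succ_of_le hi]

lemma mem_cyl_ofFin_restrict (n : ℕ) (ω : ℕ → ℕ) : ω ∈ cyl n (ofFin n fun i => ω i) :=
  fun i hi => by rw [ofFin_apply _ hi]

lemma measurableSet_cyl (n : ℕ) (q : ℕ → ℕ) : MeasurableSet (cyl n q) := by
  have : cyl n q = ⋂ i ∈ Set.Iic n, (fun ω : ℕ → ℕ => ω i) ⁻¹' {q i} := by
    ext ω; simp [cyl]
  rw [this]
  exact MeasurableSet.biInter (Set.to_countable _) fun i _ =>
    measurable_pi_apply i (measurableSet_singleton _)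

lemma pairwise_disjoint_cyl_ofFin (n : ℕ) :
    Pairwise (Function.onFun Disjoint fun v : Fin (n + 1) → ℕ => cyl n (ofFin n v)) := by
  refine fun v v' hne => Set.disjoint_left.2 fun ω h h' => hne (funext fun i => ?_)
  have hi := Nat.lt_succ_iff.1 i.2
  have e := (h i hi).symm.trans (h' i hi)
  rwa [ofFin_apply _ hi, ofFin_apply _ hi] at e

lemma DeterminedUpTo.eq_iUnion_cyl {n : ℕ} {E : Set (ℕ → ℕ)} (hE : DeterminedUpTo n E) :
    E = ⋃ v : {v : Fin (n + 1) → ℕ // ofFin n v ∈ E}, cyl n (ofFin n v.1) := by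
  ext ω
  simp only [Set.mem_iUnion, Subtype.exists, exists_prop]
  refine ⟨fun hω => ⟨_, ?_, mem_cyl_ofFin_restrict n ω⟩, fun ⟨v, hv, hω⟩ => ?_⟩
  · exact hE ω _ (mem_cyl_ofFin_restrict n ω) hω
  · exact hE _ ω (fun i hi => (hω i hi).symm) hv

lemma DeterminedUpTo.measurableSet {n : ℕ} {E : Set (ℕ → ℕ)} (hE : DeterminedUpTo n E) :
    MeasurableSet E := by
  rw [hE.eq_iUnion_cyl]
  exact MeasurableSet.iUnion fun v => measurableSet_cyl n _

lemma DeterminedUpTo.measure_inter_eq_tsum {n : ℕ} {E : Set (ℕ → ℕ)} (hE : DeterminedUpTo n E)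
    (P : Measure (ℕ → ℕ)) {S : Set (ℕ → ℕ)} (hS : MeasurableSet S) :
    P (E ∩ S) = ∑' v : {v : Fin (n + 1) → ℕ // ofFin n v ∈ E}, P (cyl n (ofFin n v.1) ∩ S) := by
  conv_lhs => rw [hE.eq_iUnion_cyl, Set.iUnion_inter]
  rw [measure_iUnion]
  · exact fun v v' hne => ((pairwise_disjoint_cyl_ofFin n) (Subtype.coe_ne_coe.2 hne)).mono
      Set.inter_subset_left Set.inter_subset_left
  · exact fun v => (measurableSet_cyl n _).inter hS

lemma DeterminedUpTo.measure_eq_tsum {n : ℕ} {E : Set (ℕ → ℕ)} (hE : DeterminedUpTo n E)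
    (P : Measure (ℕ → ℕ)) :
    P E = ∑' v : {v : Fin (n + 1) → ℕ // ofFin n v ∈ E}, P (cyl n (ofFin n v.1)) := by
  simpa using hE.measure_inter_eq_tsum P MeasurableSet.univ

lemma determinedUpTo_coord_preimage (n : ℕ) (s : Set ℕ) :
    DeterminedUpTo n {ω | ω n ∈ s} :=
  fun ω ω' h hω => show ω' n ∈ s by rw [← h n le_rfl]; exact hω

def cylinders : Set (Set (ℕ → ℕ)) := {s | ∃ n q, s = cyl n q}

lemma isPiSystem_cylinders : IsPiSystem cylinders := by
  rintro _ ⟨n, q, rfl⟩ _ ⟨n', q', rfl⟩ ⟨ω, hω, hω'⟩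
  wlog h : n ≤ n' generalizing n n' q q'
  · rw [Set.inter_comm]; exact this n' q' n q hω' hω (le_of_not_ge h)
  refine ⟨n', q', Set.inter_eq_self_of_subset_right fun ω' hω'' i hi => ?_⟩
  rw [hω'' i (hi.trans h), ← hω' i (hi.trans h), hω i hi]

lemma generateFrom_cylinders :
    MeasurableSpace.generateFrom cylinders = (inferInstance : MeasurableSpace (ℕ → ℕ)) := by
  refine le_antisymm (MeasurableSpace.generateFrom_le ?_) (iSup_le fun i => ?_)
  · rintro _ ⟨n, q, rfl⟩; exact measurableSet_cyl n q
  · rintro _ ⟨s, -, rfl⟩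
    refine (congrArg (MeasurableSet[.generateFrom cylinders])
      (determinedUpTo_coord_preimage i s).eq_iUnion_cyl).mpr ?_
    exact MeasurableSet.iUnion fun v => MeasurableSpace.measurableSet_generateFrom ⟨i, _, rfl⟩

def shift (j : ℕ) (ω : ℕ → ℕ) : ℕ → ℕ := fun i => ω (j + i)

lemma measurable_shift (j : ℕ) : Measurable (shift j) :=
  measurable_pi_lambda _ fun i => measurable_pi_apply (j + i)

def glue (j : ℕ) (a q : ℕ → ℕ) : ℕ → ℕ := fun i => if i ≤ j then a i else q (i - j)

lemma glue_of_le {j i : ℕ} {a q : ℕ → ℕ} (hi : i ≤ j) : glue j a q i = a i := if_pos hi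

lemma glue_add {j : ℕ} {a q : ℕ → ℕ} (haq : a j = q 0) (i : ℕ) : glue j a q (j + i) = q i := by
  rcases Nat.eq_zero_or_pos i with rfl | hi
  · simp [glue, haq]
  · simp [glue, show ¬ j + i ≤ j by omega]

lemma cyl_inter_shift_preimage {j m : ℕ} {a q : ℕ → ℕ} (haq : a j = q 0) :
    cyl j a ∩ shift j ⁻¹' cyl m q = cyl (j + m) (glue j a q) := by
  ext ω
  refine ⟨fun ⟨ha, hq⟩ i hi => ?_, fun h => ⟨fun i hi => ?_, fun i hi => ?_⟩⟩
  · by_cases hij : i ≤ j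
    · rw [glue_of_le hij]; exact ha i hij
    · obtain ⟨i, rfl⟩ := Nat.exists_eq_add_of_le (le_of_not_ge hij)
      rw [glue_add haq]; exact hq i (by omega)
  · rw [h i (by omega), glue_of_le hi]
  · show ω (j + i) = q i
    rw [h (j + i) (by omega), glue_add haq]

lemma measurableSet_coord (n l : ℕ) : MeasurableSet {ω : ℕ → ℕ | ω n = l} :=
  show MeasurableSet ((fun ω : ℕ → ℕ => ω n) ⁻¹' {l}) from
    measurable_pi_apply n (measurableSet_singleton l)

lemma tsum_measure_inter_coord (P : Measure (ℕ → ℕ)) {A : Set (ℕ → ℕ)} (hA : MeasurableSet A)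
    (n : ℕ) : ∑' l, P (A ∩ {ω | ω n = l}) = P A :=
  tsum_measure_inter_preimage_singleton P (measurable_pi_apply n) hA

def noReturn (m : ℕ) : Set (ℕ → ℕ) := {ω | ∀ j < m, ω (j + 1) ≠ 0}

def firstReturnAt (j : ℕ) : Set (ℕ → ℕ) := noReturn j ∩ {ω | ω (j + 1) = 0}

lemma noReturn_antitone : Antitone noReturn :=
  fun _ _ h _ hω j hj => hω j (lt_of_lt_of_le hj h)

@[simp] lemma noReturn_zero : noReturn 0 = Set.univ := by
  ext ω; simp [noReturn]

lemma determinedUpTo_noReturn (m : ℕ) : DeterminedUpTo m (noReturn m) :=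
  fun ω ω' h hω j hj => by rw [← h (j + 1) hj]; exact hω j hj

lemma measurableSet_noReturn (m : ℕ) : MeasurableSet (noReturn m) :=
  (determinedUpTo_noReturn m).measurableSet

lemma determinedUpTo_firstReturnAt (j : ℕ) : DeterminedUpTo (j + 1) (firstReturnAt j) :=
  fun ω ω' h ⟨hω, hω0⟩ => ⟨determinedUpTo_noReturn j ω ω' (fun i hi => h i (by omega)) hω,
    show ω' (j + 1) = 0 by rw [← h (j + 1) le_rfl]; exact hω0⟩

lemma measurableSet_firstReturnAt (j : ℕ) : MeasurableSet (firstReturnAt j) :=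
  (determinedUpTo_firstReturnAt j).measurableSet

lemma firstReturnAt_subset_noReturn {j m : ℕ} (h : m ≤ j) : firstReturnAt j ⊆ noReturn m :=
  Set.inter_subset_left.trans (noReturn_antitone h)

lemma disjoint_firstReturnAt_noReturn {j m : ℕ} (h : j < m) :
    Disjoint (firstReturnAt j) (noReturn m) :=
  Set.disjoint_left.2 fun _ hω hω' => hω' j h hω.2

lemma pairwise_disjoint_firstReturnAt : Pairwise (Function.onFun Disjoint firstReturnAt) := by
  intro j j' hne
  rcases lt_or_gt_of_ne hne with h | h
  · exact (disjoint_firstReturnAt_noReturn (Nat.lt_succ_self j)).mono_right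
      (firstReturnAt_subset_noReturn h)
  · exact ((disjoint_firstReturnAt_noReturn (Nat.lt_succ_self j')).mono_right
      (firstReturnAt_subset_noReturn h)).symm

lemma compl_noReturn (m : ℕ) : (noReturn m)ᶜ = ⋃ j ∈ Finset.range m, firstReturnAt j := by
  ext ω
  simp only [Set.mem_compl_iff, Set.mem_iUnion, Finset.mem_range, exists_prop]
  constructor
  · intro hω
    have hex : ∃ j, ω (j + 1) = 0 ∧ j < m := by simpa [noReturn, and_comm] using hω
    refine ⟨Nat.find hex, (Nat.find_spec hex).2,
      fun i hi h0 => Nat.find_min hex hi ⟨h0, hi.trans (Nat.find_spec hex).2⟩,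
      (Nat.find_spec hex).1⟩
  · rintro ⟨j, hj, hω⟩
    exact Set.disjoint_left.1 (disjoint_firstReturnAt_noReturn hj) hω

lemma mem_noReturn_iff {m : ℕ} {ω : ℕ → ℕ} : ω ∈ noReturn m ↔ (m : ℝ≥0∞) < T0 ω := by
  constructor
  · intro hω
    refine lt_of_lt_of_le (ENNReal.lt_add_right (natCast_ne_top m) one_ne_zero) (le_sInf ?_)
    rintro _ ⟨i, hi, hωi, rfl⟩
    obtain ⟨j, rfl⟩ : ∃ j, i = j + 1 := ⟨i - 1, by omega⟩
    have : m ≤ j := not_lt.1 fun hj => hω j hj hωi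
    exact_mod_cast Nat.succ_le_succ this
  · intro h j hj hω
    have : T0 ω ≤ (j + 1 : ℕ) := sInf_le ⟨j + 1, j.succ_pos, hω, rfl⟩
    exact absurd (lt_of_lt_of_le h this) (by exact_mod_cast (by omega : ¬ m < j + 1))

lemma T0_eq_top_or_natCast (ω : ℕ → ℕ) : T0 ω = ⊤ ∨ ∃ N : ℕ, T0 ω = N := by
  by_cases hex : ∃ i, 0 < i ∧ ω i = 0
  · refine Or.inr ⟨Nat.find hex, le_antisymm
      (sInf_le ⟨_, (Nat.find_spec hex).1, (Nat.find_spec hex).2, rfl⟩) (le_sInf ?_)⟩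
    rintro _ ⟨i, hi, hωi, rfl⟩
    exact_mod_cast Nat.find_min' hex ⟨hi, hωi⟩
  · refine Or.inl (sInf_eq_top.2 ?_)
    rintro _ ⟨i, hi, hωi, rfl⟩
    exact absurd ⟨i, hi, hωi⟩ hex

lemma T0_eq_tsum_indicator (ω : ℕ → ℕ) :
    T0 ω = ∑' m, (noReturn m).indicator (1 : (ℕ → ℕ) → ℝ≥0∞) ω := by
  have h1 : ∀ m, (noReturn m).indicator (1 : (ℕ → ℕ) → ℝ≥0∞) ω =
      if (m : ℝ≥0∞) < T0 ω then 1 else 0 := fun m => by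
    by_cases h : ω ∈ noReturn m
    · rw [Set.indicator_of_mem h, if_pos (mem_noReturn_iff.1 h), Pi.one_apply]
    · rw [Set.indicator_of_notMem h, if_neg (mt mem_noReturn_iff.2 h)]
  simp only [h1]
  rcases T0_eq_top_or_natCast ω with h | ⟨N, h⟩ <;> rw [h]
  · simp
  · rw [tsum_eq_sum (s := Finset.range N) fun m hm => by simpa using hm]
    simp [Finset.sum_boole, Finset.filter_true_of_mem fun x hx => Finset.mem_range.1 hx]

lemma setOf_div_four_lt_T0 (n : ℕ) : {ω : ℕ → ℕ | (n : ℝ≥0∞) / 4 < T0 ω} = noReturn (n / 4) := by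
  ext ω
  change (n : ℝ≥0∞) / 4 < T0 ω ↔ ω ∈ noReturn (n / 4)
  rw [mem_noReturn_iff]
  rcases T0_eq_top_or_natCast ω with h | ⟨N, h⟩ <;> rw [h]
  · simp [ENNReal.div_lt_top]
  · rw [ENNReal.div_lt_iff (by simp) (by simp), Nat.cast_lt]
    exact_mod_cast (Nat.div_lt_iff_lt_mul (by norm_num)).symm

/-- Paths whose last visit to `0` up to time `m` is at time `m - s`, and with `Z_m = l`. -/
def lastExcursion (m s l : ℕ) : Set (ℕ → ℕ) :=
  {ω | ω (m - s) = 0} ∩ shift (m - s) ⁻¹' (noReturn s ∩ {ω | ω s = l})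

lemma lastExcursion_subset {m s : ℕ} (l : ℕ) (hs : s ≤ m) :
    lastExcursion m s l ⊆ {ω | ω m = l} := fun ω hω => by
  simpa [shift, Nat.sub_add_cancel hs] using hω.2.2

lemma pairwiseDisjoint_lastExcursion (m l : ℕ) :
    (↑(Finset.range (m + 1)) : Set ℕ).PairwiseDisjoint (lastExcursion m · l) := by
  intro s hs s' hs' hne
  wlog h : s < s' generalizing s s'
  · exact (this hs' hs hne.symm (lt_of_le_of_ne (not_lt.1 h) hne.symm)).symm
  have hs' : s' ≤ m := Nat.lt_succ_iff.1 (Finset.mem_range.1 hs')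
  refine Set.disjoint_left.2 fun ω hω hω' => hω'.2.1 (s' - s - 1) (by omega) ?_
  simpa [shift, show m - s' + (s' - s - 1 + 1) = m - s by omega] using hω.1

lemma subset_iUnion_lastExcursion (m l : ℕ) :
    {ω : ℕ → ℕ | ω m = l} ∩ {ω | ω 0 = 0} ⊆ ⋃ s ∈ Finset.range (m + 1), lastExcursion m s l := by
  rintro ω ⟨hm, h0⟩
  set i := Nat.findGreatest (fun t => ω t = 0) m
  have hi : i ≤ m := Nat.findGreatest_le m
  refine Set.mem_biUnion (x := m - i) (Finset.mem_range.2 (by omega)) ⟨?_, ?_, ?_⟩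
  · simpa [show m - (m - i) = i by omega] using
      Nat.findGreatest_spec (P := fun t => ω t = 0) (Nat.zero_le m) h0
  · intro j hj
    exact Nat.findGreatest_is_greatest (P := fun t => ω t = 0) (n := m)
      (k := m - (m - i) + (j + 1)) (by omega) (by omega)
  · simpa [shift, show m - (m - i) + (m - i) = m by omega] using hm

section ReturnTime

variable (P : Measure (ℕ → ℕ))

lemma setLIntegral_T0 (A : Set (ℕ → ℕ)) :
    ∫⁻ ω in A, T0 ω ∂P = ∑' m, P (A ∩ noReturn m) := by
  simp_rw [T0_eq_tsum_indicator]
  rw [lintegral_tsum fun m => (measurable_one.indicator (measurableSet_noReturn m)).aemeasurable]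
  refine tsum_congr fun m => ?_
  rw [lintegral_indicator_one (measurableSet_noReturn m), Measure.restrict_apply
    (measurableSet_noReturn m), Set.inter_comm]

lemma measure_noReturn_le_setLIntegral_T0 (m : ℕ) :
    P (noReturn m) ≤ ∫⁻ ω in noReturn m, T0 ω ∂P := by
  rw [setLIntegral_T0 P (noReturn m)]
  simpa using ENNReal.le_tsum (f := fun s => P (noReturn m ∩ noReturn s)) 0

lemma tsum_measure_noReturn_tail_le (m : ℕ) :
    ∑' s, (if m < s then P (noReturn s) else 0) ≤ ∫⁻ ω in noReturn m, T0 ω ∂P := by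
  rw [setLIntegral_T0 P (noReturn m)]
  refine ENNReal.tsum_le_tsum fun s => ?_
  split_ifs with h
  · rw [Set.inter_eq_self_of_subset_right (noReturn_antitone h.le)]
  · exact zero_le

end ReturnTime

end PathSpace

open PathSpace

namespace MCNat

instance (M : MCNat) (k : ℕ) : IsProbabilityMeasure (M.ℙ k) := M.prob k

variable (M : MCNat)

lemma measure_cyl (k n : ℕ) (q : ℕ → ℕ) :
    M.ℙ k (cyl n q) = if q 0 = k then ∏ i ∈ Finset.range n, M.p (q i) (q (i + 1)) else 0 :=
  M.fdd k n q

lemma measure_cyl_glue (k j m : ℕ) {a q : ℕ → ℕ} (ha : a j = 0) (hq : q 0 = 0) :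
    M.ℙ k (cyl (j + m) (glue j a q)) = M.ℙ k (cyl j a) * M.ℙ 0 (cyl m q) := by
  have hprod : ∏ i ∈ Finset.range (j + m), M.p (glue j a q i) (glue j a q (i + 1)) =
      (∏ i ∈ Finset.range j, M.p (a i) (a (i + 1))) *
        ∏ i ∈ Finset.range m, M.p (q i) (q (i + 1)) := by
    rw [Finset.prod_range_add]
    congr 1
    · refine Finset.prod_congr rfl fun i hi => ?_
      have hi := Finset.mem_range.1 hi
      rw [glue_of_le hi.le, glue_of_le hi]
    · refine Finset.prod_congr rfl fun i _ => ?_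
      rw [glue_add (ha.trans hq.symm), add_assoc, glue_add (ha.trans hq.symm)]
  rw [measure_cyl, measure_cyl, measure_cyl, glue_of_le (Nat.zero_le j), hprod, if_pos hq,
    ite_mul, zero_mul]

lemma measure_inter_shift_preimage_cyl (k : ℕ) {j : ℕ} {E : Set (ℕ → ℕ)}
    (hE : DeterminedUpTo j E) (hE0 : ∀ ω ∈ E, ω j = 0) (m : ℕ) (q : ℕ → ℕ) :
    M.ℙ k (E ∩ shift j ⁻¹' cyl m q) = M.ℙ k E * M.ℙ 0 (cyl m q) := by
  by_cases hq : q 0 = 0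
  · rw [hE.measure_inter_eq_tsum _ (measurable_shift j (measurableSet_cyl m q)),
      hE.measure_eq_tsum, ← ENNReal.tsum_mul_right]
    refine tsum_congr fun v => ?_
    rw [cyl_inter_shift_preimage ((hE0 _ v.2).trans hq.symm),
      M.measure_cyl_glue k j m (hE0 _ v.2) hq]
  · have hempty : E ∩ shift j ⁻¹' cyl m q = ∅ :=
      Set.eq_empty_of_forall_notMem fun ω ⟨hω, hω'⟩ =>
        hq ((hω' 0 (Nat.zero_le m)).symm.trans (hE0 ω hω))
    rw [hempty, measure_cyl, if_neg hq, measure_empty, mul_zero]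

/-- The Markov property at a time `j` at which the chain sits at `0`. -/
theorem measure_inter_shift_preimage (k : ℕ) {j : ℕ} {E : Set (ℕ → ℕ)}
    (hE : DeterminedUpTo j E) (hE0 : ∀ ω ∈ E, ω j = 0) {F : Set (ℕ → ℕ)} (hF : MeasurableSet F) :
    M.ℙ k (E ∩ shift j ⁻¹' F) = M.ℙ k E * M.ℙ 0 F := by
  have hmap : ∀ F, MeasurableSet F →
      ((M.ℙ k).restrict E).map (shift j) F = M.ℙ k (E ∩ shift j ⁻¹' F) := fun F hF => by
    rw [Measure.map_apply (measurable_shift j) hF,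
      Measure.restrict_apply (measurable_shift j hF), Set.inter_comm]
  suffices h : ((M.ℙ k).restrict E).map (shift j) = M.ℙ k E • M.ℙ 0 by
    rw [← hmap F hF, h, Measure.smul_apply, smul_eq_mul]
  refine ext_of_generate_finite cylinders generateFrom_cylinders.symm isPiSystem_cylinders
    ?_ ?_
  · rintro _ ⟨m, q, rfl⟩
    rw [hmap _ (measurableSet_cyl m q), Measure.smul_apply, smul_eq_mul,
      M.measure_inter_shift_preimage_cyl k hE hE0]
  · simp [hmap _ MeasurableSet.univ]

lemma ET0_eq_tsum (k : ℕ) : ET0 M k = ∑' m, M.ℙ k (noReturn m) := by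
  rw [ET0, ← setLIntegral_univ, setLIntegral_T0]
  simp

lemma uinf_le_one : uinf M ≤ 1 := by
  refine ENNReal.inv_le_one.2 ?_
  rw [ET0_eq_tsum]
  simpa using ENNReal.le_tsum (f := fun m => M.ℙ 0 (noReturn m)) 0

def firstReturnProb (k j : ℕ) : ℝ≥0∞ := M.ℙ k (firstReturnAt j)

/-- `ℙ₀(Z_s = l, T₀ > s)`. -/
def excursionProb (s l : ℕ) : ℝ≥0∞ := M.ℙ 0 (noReturn s ∩ {ω | ω s = l})

lemma tsum_excursionProb (s : ℕ) : ∑' l, M.excursionProb s l = M.ℙ 0 (noReturn s) :=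
  tsum_measure_inter_coord _ (measurableSet_noReturn s) s

lemma tsum_firstReturnProb {k : ℕ} (hk : ET0 M k ≠ ⊤) : ∑' j, M.firstReturnProb k j = 1 := by
  have hnever : M.ℙ k (⋂ m, noReturn m) = 0 := by
    by_contra h
    refine hk (top_le_iff.1 ?_)
    rw [ET0_eq_tsum, ← ENNReal.tsum_const_eq_top_of_ne_zero (α := ℕ) h]
    exact ENNReal.tsum_le_tsum fun m => measure_mono (Set.iInter_subset _ m)
  have hcover : (⋂ m, noReturn m)ᶜ ⊆ ⋃ j, firstReturnAt j := by
    simp only [Set.compl_iInter, compl_noReturn]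
    exact Set.iUnion_subset fun m => Set.iUnion₂_subset fun j _ => Set.subset_iUnion _ j
  rw [show ∑' j, M.firstReturnProb k j = ∑' j, M.ℙ k (firstReturnAt j) from rfl,
    ← measure_iUnion pairwise_disjoint_firstReturnAt measurableSet_firstReturnAt]
  refine le_antisymm prob_le_one ?_
  rw [← prob_compl_eq_one_iff (MeasurableSet.iInter measurableSet_noReturn)] at hnever
  exact hnever ▸ measure_mono hcover

lemma tsum_firstReturnProb_tail_le (k m : ℕ) :
    ∑' j, (if m ≤ j then M.firstReturnProb k j else 0) ≤ M.ℙ k (noReturn m) := by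
  have h : ∀ j, (if m ≤ j then M.firstReturnProb k j else 0) =
      M.ℙ k (firstReturnAt j ∩ noReturn m) := fun j => by
    split_ifs with hj
    · rw [Set.inter_eq_self_of_subset_left (firstReturnAt_subset_noReturn hj), firstReturnProb]
    · rw [(disjoint_firstReturnAt_noReturn (not_le.1 hj)).inter_eq, measure_empty]
  rw [tsum_congr h, ← measure_iUnion
    (fun j j' hne => (pairwise_disjoint_firstReturnAt hne).mono Set.inter_subset_left
      Set.inter_subset_left)
    fun j => (measurableSet_firstReturnAt j).inter (measurableSet_noReturn m)]
  exact measure_mono (Set.iUnion_subset fun j => Set.inter_subset_right)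

lemma measure_coord_eq_tsum_firstReturnProb (k n l : ℕ) :
    M.ℙ k {ω | ω n = l} = (∑' j, if j < n then
        M.firstReturnProb k j * M.ℙ 0 {ω | ω (n - 1 - j) = l} else 0) +
      M.ℙ k (noReturn n ∩ {ω | ω n = l}) := by
  rw [Set.inter_comm (noReturn n), ← measure_inter_add_sdiff _ (measurableSet_noReturn n),
    add_comm, Set.sdiff_eq, compl_noReturn, Set.inter_iUnion₂, measure_biUnion_finset
      (fun j _ j' _ hne => (pairwise_disjoint_firstReturnAt hne).mono Set.inter_subset_right
        Set.inter_subset_right)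
      fun j _ => (measurableSet_coord n l).inter (measurableSet_firstReturnAt j),
    tsum_eq_sum (s := Finset.range n) fun j hj => if_neg (by simpa using hj)]
  refine congrArg (· + _) (Finset.sum_congr rfl fun j hj => ?_)
  have hj : j < n := Finset.mem_range.1 hj
  have hset : {ω : ℕ → ℕ | ω n = l} ∩ firstReturnAt j =
      firstReturnAt j ∩ shift (j + 1) ⁻¹' {ω | ω (n - 1 - j) = l} := by
    ext ω
    simp only [Set.mem_inter_iff, Set.mem_preimage, Set.mem_ofPred_eq, shift,
      show j + 1 + (n - 1 - j) = n by omega, and_comm]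
  rw [if_pos hj, hset, M.measure_inter_shift_preimage k (determinedUpTo_firstReturnAt j)
    (fun ω hω => hω.2) (measurableSet_coord _ _), firstReturnProb]

lemma measure_compl_coord_zero_eq_zero : M.ℙ 0 {ω | ω 0 = 0}ᶜ = 0 := by
  have h := M.measure_cyl 0 0 fun _ => 0
  rw [if_pos rfl, Finset.prod_range_zero] at h
  rw [prob_compl_eq_zero_iff (measurableSet_coord 0 0), ← h]
  congr 1
  ext ω
  simp [cyl]

/-- Last-exit decomposition at the last visit to `0` before time `m`. -/
lemma measure_coord_eq_tsum_excursionProb (m l : ℕ) :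
    M.ℙ 0 {ω | ω m = l} = ∑' s, if s ≤ m then u M (m - s) * M.excursionProb s l else 0 := by
  have hmeas : ∀ s, MeasurableSet (lastExcursion m s l) := fun s =>
    (measurableSet_coord _ 0).inter (measurable_shift _
      ((measurableSet_noReturn s).inter (measurableSet_coord s l)))
  have hunion : M.ℙ 0 (⋃ s ∈ Finset.range (m + 1), lastExcursion m s l) = M.ℙ 0 {ω | ω m = l} := by
    refine le_antisymm (measure_mono (Set.iUnion₂_subset fun s hs =>
      lastExcursion_subset l (Nat.lt_succ_iff.1 (Finset.mem_range.1 hs)))) ?_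
    rw [← measure_inter_conull M.measure_compl_coord_zero_eq_zero]
    exact measure_mono (subset_iUnion_lastExcursion m l)
  rw [← hunion, measure_biUnion_finset (pairwiseDisjoint_lastExcursion m l) fun s _ => hmeas s,
    tsum_eq_sum (s := Finset.range (m + 1)) fun s hs => if_neg (by simpa using hs)]
  refine Finset.sum_congr rfl fun s hs => ?_
  rw [if_pos (Nat.lt_succ_iff.1 (Finset.mem_range.1 hs)), lastExcursion,
    M.measure_inter_shift_preimage 0 (E := {ω | ω (m - s) = 0})
      (determinedUpTo_coord_preimage _ {0}) (fun ω hω => hω)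
      ((measurableSet_noReturn s).inter (measurableSet_coord s l))]
  rfl

/-- `u_{n-1-m}`, read as `0` when the index `n - 1 - m` would be negative. -/
def uBack (n m : ℕ) : ℝ≥0∞ := if m < n then u M (n - 1 - m) else 0

lemma measure_coord_eq_tsum_tsum (k n l : ℕ) :
    M.ℙ k {ω | ω n = l} = (∑' j, ∑' s,
        M.firstReturnProb k j * M.excursionProb s l * M.uBack n (j + s)) +
      M.ℙ k (noReturn n ∩ {ω | ω n = l}) := by
  rw [measure_coord_eq_tsum_firstReturnProb]
  refine congrArg (· + _) (tsum_congr fun j => ?_)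
  split_ifs with hj
  · rw [measure_coord_eq_tsum_excursionProb, ← ENNReal.tsum_mul_left]
    refine tsum_congr fun s => ?_
    by_cases hs : j + s < n
    · rw [if_pos (by omega), uBack, if_pos hs, Nat.sub_sub]; ring
    · rw [if_neg (by omega), uBack, if_neg hs, mul_zero, mul_zero]
  · exact (ENNReal.tsum_eq_zero.2 fun s => by rw [uBack, if_neg (by omega), mul_zero]).symm

/-- The limit law is `u_∞` times the expected occupation measure of an excursion from `0`. -/
theorem measure_singleton_eq (hT : ET0 M 0 ≠ ⊤) (μ : Measure ℕ) [IsProbabilityMeasure μ]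
    (hconv : ∀ l, Tendsto (fun n => M.ℙ 0 {ω | ω n = l}) atTop (nhds (μ {l}))) (l : ℕ) :
    μ {l} = uinf M * ∑' s, M.excursionProb s l := by
  have hexc : ∑' s, ∑' l, M.excursionProb s l = ET0 M 0 := by
    simp only [tsum_excursionProb, ET0_eq_tsum]
  have key : ∀ l, μ {l} = μ {0} * ∑' s, M.excursionProb s l := fun l => by
    refine tendsto_nhds_unique (hconv l) ?_
    simp_rw [measure_coord_eq_tsum_excursionProb, ← ENNReal.tsum_mul_left]
    refine ENNReal.tendsto_tsum_of_dominated_convergence (bound := (M.excursionProb · l))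
      (fun m s => ?_) ?_ fun s => ?_
    · split_ifs
      · exact mul_le_of_le_one_left zero_le prob_le_one
      · exact zero_le
    · refine ne_top_of_le_ne_top (hexc ▸ hT) (ENNReal.tsum_le_tsum fun s => ?_)
      exact ENNReal.le_tsum (f := M.excursionProb s) l
    · refine (ENNReal.Tendsto.mul_const ((hconv 0).comp (tendsto_sub_atTop_nat s))
        (Or.inr (measure_ne_top _ _))).congr' ?_
      filter_upwards [eventually_ge_atTop s] with m hm
      rw [if_pos hm]
      rfl
  have hμ0 : μ {0} * ET0 M 0 = 1 := by
    have htot := tsum_measure_inter_preimage_singleton μ measurable_id MeasurableSet.univ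
    simp only [Set.univ_inter, Set.preimage_id, measure_univ] at htot
    rw [← htot, tsum_congr key, ENNReal.tsum_mul_left, ENNReal.tsum_comm, hexc]
  rw [key l, ENNReal.eq_inv_of_mul_eq_one_left hμ0, uinf]

lemma absDiff_uBack_le_one (n m : ℕ) : absDiff (M.uBack n m) (uinf M) ≤ 1 :=
  (absDiff_le_max _ _).trans (max_le (by unfold uBack; split_ifs; exacts [prob_le_one, zero_le])
    (uinf_le_one M))

lemma absDiff_uBack_le {n m : ℕ} {S : ℝ}
    (hS : ∀ m, n / 2 ≤ m → m ≤ n → |(u M m).toReal - (uinf M).toReal| ≤ S) (hm : m + n / 2 < n) :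
    absDiff (M.uBack n m) (uinf M) ≤ ENNReal.ofReal S := by
  rw [uBack, if_pos (by omega), absDiff_eq_ofReal (x := u M _) (measure_ne_top _ _)
    (ne_top_of_le_ne_top one_ne_top (uinf_le_one M))]
  exact ENNReal.ofReal_le_ofReal (hS _ (by omega) (by omega))

lemma tsum_tsum_tsum_mul_excursionProb (k : ℕ) (c : ℕ → ℕ → ℝ≥0∞) :
    ∑' l, ∑' j, ∑' s, M.firstReturnProb k j * M.excursionProb s l * c j s =
      ∑' j, ∑' s, M.firstReturnProb k j * M.ℙ 0 (noReturn s) * c j s := by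
  rw [ENNReal.tsum_comm]
  refine tsum_congr fun j => ?_
  rw [ENNReal.tsum_comm]
  refine tsum_congr fun s => ?_
  rw [← tsum_excursionProb, ← ENNReal.tsum_mul_left, ← ENNReal.tsum_mul_right]

lemma absDiff_measure_coord_le {k : ℕ} (hk : ET0 M k ≠ ⊤) (hT : ET0 M 0 ≠ ⊤)
    (μ : Measure ℕ) [IsProbabilityMeasure μ]
    (hconv : ∀ l, Tendsto (fun n => M.ℙ 0 {ω | ω n = l}) atTop (nhds (μ {l}))) (n l : ℕ) :
    absDiff (M.ℙ k {ω | ω n = l}) (μ {l}) ≤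
      (∑' j, ∑' s, M.firstReturnProb k j * M.excursionProb s l *
        absDiff (M.uBack n (j + s)) (uinf M)) +
      M.ℙ k (noReturn n ∩ {ω | ω n = l}) := by
  have hμ : μ {l} = ∑' j, ∑' s, M.firstReturnProb k j * M.excursionProb s l * uinf M := by
    simp_rw [mul_assoc, ENNReal.tsum_mul_left]
    rw [ENNReal.tsum_mul_right, tsum_firstReturnProb M hk, one_mul, ENNReal.tsum_mul_right,
      mul_comm, M.measure_singleton_eq hT μ hconv l]
  rw [measure_coord_eq_tsum_tsum, hμ]
  refine (absDiff_add_le _ _ _).trans (add_le_add_left ?_ _)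
  refine (absDiff_tsum_le _ _).trans (ENNReal.tsum_le_tsum fun j => ?_)
  refine (absDiff_tsum_le _ _).trans (ENNReal.tsum_le_tsum fun s => ?_)
  exact absDiff_mul_left_le _ _ _

theorem tsum_absDiff_measure_coord_le {k : ℕ} (hk : ET0 M k ≠ ⊤) (hT : ET0 M 0 ≠ ⊤)
    (μ : Measure ℕ) [IsProbabilityMeasure μ]
    (hconv : ∀ l, Tendsto (fun n => M.ℙ 0 {ω | ω n = l}) atTop (nhds (μ {l}))) (n : ℕ) {S : ℝ}
    (hS : ∀ m, n / 2 ≤ m → m ≤ n → |(u M m).toReal - (uinf M).toReal| ≤ S) :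
    ∑' l, absDiff (M.ℙ k {ω | ω n = l}) (μ {l}) ≤ (ET0 M 0 + 1) *
      (ENNReal.ofReal S + ∫⁻ ω in noReturn (n / 4), T0 ω ∂M.ℙ 0 +
        ∫⁻ ω in noReturn (n / 4), T0 ω ∂M.ℙ k) := by
  set c : ℕ → ℕ → ℝ≥0∞ := fun j s => absDiff (M.uBack n (j + s)) (uinf M)
  set Ik := ∫⁻ ω in noReturn (n / 4), T0 ω ∂M.ℙ k
  set I0 := ∫⁻ ω in noReturn (n / 4), T0 ω ∂M.ℙ 0
  have hPk : M.ℙ k (noReturn (n / 4)) ≤ Ik := measure_noReturn_le_setLIntegral_T0 _ _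
  have hsplit := tsum_tsum_mul_mul_le (m := n / 4) (M.firstReturnProb k)
    (fun s => M.ℙ 0 (noReturn s)) c (fun j s => M.absDiff_uBack_le_one n (j + s))
    fun j s hj hs => M.absDiff_uBack_le (m := j + s) hS (by omega)
  rw [tsum_firstReturnProb M hk, ← ET0_eq_tsum] at hsplit
  simp only [one_mul] at hsplit
  calc ∑' l, absDiff (M.ℙ k {ω | ω n = l}) (μ {l})
      ≤ ∑' l, ((∑' j, ∑' s, M.firstReturnProb k j * M.excursionProb s l * c j s) +
          M.ℙ k (noReturn n ∩ {ω | ω n = l})) :=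
        ENNReal.tsum_le_tsum (M.absDiff_measure_coord_le hk hT μ hconv n)
    _ = (∑' j, ∑' s, M.firstReturnProb k j * M.ℙ 0 (noReturn s) * c j s) +
          M.ℙ k (noReturn n) := by
        rw [ENNReal.tsum_add, tsum_measure_inter_coord _ (measurableSet_noReturn n),
          tsum_tsum_tsum_mul_excursionProb]
    _ ≤ (ET0 M 0 * ENNReal.ofReal S + Ik * ET0 M 0 + I0) + Ik := by
        gcongr ?_ + ?_
        · refine hsplit.trans (add_le_add (add_le_add le_rfl ?_) ?_)
          · exact mul_le_mul_left ((M.tsum_firstReturnProb_tail_le k _).trans hPk) _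
          · exact tsum_measure_noReturn_tail_le _ _
        · exact (measure_mono (noReturn_antitone (Nat.div_le_self n 4))).trans hPk
    _ ≤ (ET0 M 0 + 1) * (ENNReal.ofReal S + I0 + Ik) := by
        calc _ ≤ ET0 M 0 * ENNReal.ofReal S + Ik * ET0 M 0 + I0 + Ik +
              (ET0 M 0 * I0 + ENNReal.ofReal S) := le_self_add
          _ = _ := by ring

end MCNat

theorem stmt1_general (M : MCNat)
    (hT : ∀ k, ET0 M k < ⊤)
    (μ : Measure ℕ) (hμ : IsProbabilityMeasure μ)
    (hconv : ∀ k l : ℕ, Tendsto (fun n => M.ℙ k {ω | ω n = l}) atTop (nhds (μ {l}))) :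
    ∃ A : ℝ, 0 < A ∧ ∀ n k : ℕ,
      ∑' l : ℕ, |(M.ℙ k {ω | ω n = l}).toReal - (μ {l}).toReal| ≤
        A * ((Finset.Icc (n / 2) n).sup' (Finset.nonempty_Icc.2 (Nat.div_le_self n 2))
              (fun l => |(u M l).toReal - (uinf M).toReal|)
            + ET0trunc M 0 ((n : ℝ≥0∞) / 4) + ET0trunc M k ((n : ℝ≥0∞) / 4)) := by
  refine ⟨(ET0 M 0).toReal + 1, by positivity, fun n k => ?_⟩
  set S := (Finset.Icc (n / 2) n).sup' (Finset.nonempty_Icc.2 (Nat.div_le_self n 2))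
    (fun l => |(u M l).toReal - (uinf M).toReal|)
  have hS : ∀ m, n / 2 ≤ m → m ≤ n → |(u M m).toReal - (uinf M).toReal| ≤ S := fun m h h' =>
    Finset.le_sup' (fun l => |(u M l).toReal - (uinf M).toReal|) (Finset.mem_Icc.2 ⟨h, h'⟩)
  have hS0 : 0 ≤ S := (abs_nonneg _).trans (hS n (Nat.div_le_self n 2) le_rfl)
  have hI : ∀ k, ∫⁻ ω in noReturn (n / 4), T0 ω ∂M.ℙ k ≠ ⊤ := fun k =>
    ne_top_of_le_ne_top (hT k).ne (setLIntegral_le_lintegral _ _)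
  have hI0 := hI 0
  have hIk := hI k
  have hT0 := (hT 0).ne
  rw [tsum_abs_toReal_sub_eq (fun _ => measure_ne_top _ _) (fun _ => measure_ne_top _ _),
    ET0trunc, ET0trunc, setOf_div_four_lt_T0]
  refine (ENNReal.toReal_mono (by finiteness)
    (M.tsum_absDiff_measure_coord_le (hT k).ne hT0 μ (hconv 0) n hS)).trans_eq ?_
  rw [toReal_mul, toReal_add hT0 one_ne_top, toReal_add (by finiteness) hIk,
    toReal_add ofReal_ne_top hI0, toReal_ofReal hS0, toReal_one]

/-- Quantitative version of the ergodic convergence: if `𝔼_k(T₀) < ∞` for all `k` and `μ` is the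
common limiting law of the chain, then there is `A > 0` such that for all `n, k`,
`Σ_l |ℙ_k(Z_n = l) − μ {l}| ≤ A·[sup_{⌊n/2⌋ ≤ l ≤ n} |u_l − u_∞| + 𝔼_0(T₀ 1_{T₀ > n/4})
+ 𝔼_k(T₀ 1_{T₀ > n/4})]`. -/
theorem stmt1 (M : MCNat)
    (h0 : 0 < M.ℙ 0 {ω | ω 1 = 0}) (h1 : M.ℙ 0 {ω | ω 1 = 0} < 1)
    (hT : ∀ k, ET0 M k < ⊤)
    (μ : Measure ℕ) (hμ : IsProbabilityMeasure μ)
    (hconv : ∀ k l : ℕ, Tendsto (fun n => M.ℙ k {ω | ω n = l}) atTop (nhds (μ {l}))) :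
    ∃ A : ℝ, 0 < A ∧ ∀ n k : ℕ,
      ∑' l : ℕ, |(M.ℙ k {ω | ω n = l}).toReal - (μ {l}).toReal| ≤
        A * ((Finset.Icc (n / 2) n).sup' (Finset.nonempty_Icc.2 (Nat.div_le_self n 2))
              (fun l => |(u M l).toReal - (uinf M).toReal|)
            + ET0trunc M 0 ((n : ℝ≥0∞) / 4) + ET0trunc M k ((n : ℝ≥0∞) / 4)) :=
  stmt1_general M hT μ hμ hconv

end
end

section
/- Suppose 𝔼_0(T_0) = ∞ and ℙ_l(T_0 < ∞) > 0 for every l ∈ ℕ. Then for every k ∈ ℕ, Z_n → ∞ in ℙ_k-probability as n → ∞, i.e. for every l ∈ ℕ, ℙ_k(Z_n = l) → 0. -/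
open MeasureTheory Filter ENNReal

noncomputable section

/-!
Write `u n = ℙ₀(Zₙ = 0)`, `f j` for the probability that the first return to `0` happens at
time `j + 1`, and `r n = ℙ₀(T₀ > n)`. Splitting paths at their first and at their last visit to
`0` gives the renewal equation `u (n + 1) = ∑_{j ≤ n} f j * u (n - j)` and the identity
`∑_{j ≤ n} u (n - j) * r j = 1`, while `∑ r n = 𝔼₀(T₀) = ∞`.

Let `L = limsup u`. By compactness of `[0,1]^ℕ` there are times `nₖ → ∞` with `u (nₖ - i) → v i`
for every `i` and `v 0 = L`. By dominated convergence `v` satisfies the renewal equation, and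
since `v ≤ L` and `f 0 = ℙ₀(Z₁ = 0) > 0`, this propagates `v i = L` to all `i`. Passing to the
limit in the second identity gives `L * ∑_{j < J} r j ≤ 1` for all `J`, so `L = 0`.

From `k`, `ℙₖ(Zₙ = 0)` is the convolution of the first-passage law from `k` with `u`, so it also
tends to `0`; finally `ℙₖ(Zₙ = l) ℙₗ(Z_m = 0) ≤ ℙₖ(Z_{n+m} = 0)`, and `ℙₗ(Z_m = 0) > 0` for some
`m` because the chain started at `l` reaches `0` with positive probability.
-/

open Finset Topology

def kernelIter (φ : ℕ → ℕ → ℝ≥0∞) (g : ℕ → ℝ≥0∞) : ℕ → ℕ → ℝ≥0∞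
  | 0 => g
  | n + 1 => fun k => ∑' y, φ k y * kernelIter φ g n y

section kernelIter

variable (φ : ℕ → ℕ → ℝ≥0∞) (g : ℕ → ℝ≥0∞)

lemma kernelIter_zero : kernelIter φ g 0 = g := rfl

lemma kernelIter_succ (n k : ℕ) :
    kernelIter φ g (n + 1) k = ∑' y, φ k y * kernelIter φ g n y := rfl

lemma kernelIter_add (m n : ℕ) :
    kernelIter φ g (m + n) = kernelIter φ (kernelIter φ g m) n := by
  induction n with
  | zero => rfl
  | succ n ih => funext k; simp only [← add_assoc, kernelIter_succ, ih]

lemma kernelIter_le_one (hφ : ∀ x, ∑' y, φ x y ≤ 1) (hg : ∀ x, g x ≤ 1) (n k : ℕ) :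
    kernelIter φ g n k ≤ 1 := by
  induction n generalizing k with
  | zero => exact hg k
  | succ n ih =>
    calc kernelIter φ g (n + 1) k ≤ ∑' y, φ k y * 1 := by
          rw [kernelIter_succ]; gcongr with y; exact ih y
      _ ≤ 1 := by simpa using hφ k

lemma kernelIter_single_mul_le (l n k : ℕ) :
    kernelIter φ (Pi.single l 1) n k * g l ≤ kernelIter φ g n k := by
  induction n generalizing k with
  | zero => by_cases hk : k = l <;> simp [kernelIter_zero, hk]
  | succ n ih =>
    simp only [kernelIter_succ, ← ENNReal.tsum_mul_right, mul_assoc]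
    gcongr with y
    exact ih y

lemma tsum_path_eq_kernelIter (n k : ℕ) :
    ∑' a : Fin (n + 1) → ℕ, (if a 0 = k then
      (∏ i : Fin n, φ (a i.castSucc) (a i.succ)) * g (a (Fin.last n)) else 0) =
      kernelIter φ g n k := by
  induction n generalizing k with
  | zero =>
    rw [← (Equiv.funUnique (Fin 1) ℕ).symm.tsum_eq, tsum_eq_single k (by simp +contextual)]
    simp [kernelIter_zero]
  | succ n ih =>
    rw [← (Fin.consEquiv fun _ => ℕ).tsum_eq, ENNReal.tsum_prod',
      tsum_eq_single k (by simp +contextual), kernelIter_succ]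
    simp_rw [← ih, ← ENNReal.tsum_mul_left]
    rw [ENNReal.tsum_comm]
    refine tsum_congr fun b => ?_
    rw [tsum_eq_single (b 0) (by simp +contextual [eq_comm])]
    simp [Fin.consEquiv, Fin.prod_univ_succ, mul_assoc]

end kernelIter

lemma tendsto_sum_range_mul_of_tendsto {a w v : ℕ → ℝ} {m : ℕ → ℕ} (ha : Summable a)
    (hw : ∀ n, |w n| ≤ 1) (hm : Tendsto m atTop atTop)
    (hv : ∀ j, Tendsto (fun k => w (m k - j)) atTop (𝓝 (v j))) :
    Tendsto (fun k => ∑ j ∈ range (m k + 1), a j * w (m k - j)) atTop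
      (𝓝 (∑' j, a j * v j)) := by
  simp_rw [fun k => sum_eq_tsum_indicator (fun j => a j * w (m k - j)) (range (m k + 1))]
  refine tendsto_tsum_of_dominated_convergence ha.abs (fun j => ?_) (.of_forall fun k j => ?_)
  · refine ((hv j).const_mul (a j)).congr' ?_
    filter_upwards [hm.eventually_ge_atTop j] with k hk
    rw [Set.indicator_of_mem (by simpa [Nat.lt_succ_iff] using hk)]
  · refine (norm_indicator_le_norm_self _ _).trans ?_
    simpa [abs_mul] using mul_le_of_le_one_right (abs_nonneg (a j)) (hw _)

lemma exists_tendsto_shifts_limsup {u : ℕ → ℝ} (hu : ∀ n, u n ∈ Set.Icc (0 : ℝ) 1) :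
    ∃ (n : ℕ → ℕ) (v : ℕ → ℝ), Tendsto n atTop atTop ∧
      (∀ i, Tendsto (fun k => u (n k - i)) atTop (𝓝 (v i))) ∧
      v 0 = limsup u atTop ∧ ∀ i, v i ∈ Set.Icc 0 (limsup u atTop) := by
  have hbdd : IsBoundedUnder (· ≤ ·) atTop u := isBoundedUnder_of ⟨1, fun n => (hu n).2⟩
  have hcobdd : IsCoboundedUnder (· ≤ ·) atTop u :=
    (isBoundedUnder_of ⟨0, fun n => (hu n).1⟩).isCoboundedUnder_le
  obtain ⟨φ, hφ, hφL⟩ := (MapClusterPt.limsup hcobdd hbdd).tendsto_subseq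
  obtain ⟨v, hv01, ψ, hψ, hv⟩ := (isCompact_univ_pi fun _ => isCompact_Icc).tendsto_subseq
    (x := fun k i => u (φ k - i)) fun k => Set.mem_univ_pi.2 fun i => hu _
  have hn : Tendsto (φ ∘ ψ) atTop atTop := (hφ.comp hψ).tendsto_atTop
  have hvi : ∀ i, Tendsto (fun k => u ((φ ∘ ψ) k - i)) atTop (𝓝 (v i)) :=
    tendsto_pi_nhds.1 hv
  refine ⟨φ ∘ ψ, v, hn, hvi, ?_, fun i => ⟨(hv01 i trivial).1, ?_⟩⟩
  · exact tendsto_nhds_unique (hvi 0) (hφL.comp hψ.tendsto_atTop)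
  · exact (MapClusterPt.of_comp ((tendsto_sub_atTop_nat i).comp hn)
      (hvi i).mapClusterPt).le_limsup hbdd

lemma le_apply_zero_of_le_tsum_mul {a w : ℕ → ℝ} {L : ℝ} (ha_nonneg : ∀ j, 0 ≤ a j)
    (ha : Summable a) (ha_tsum : ∑' j, a j ≤ 1) (ha_zero : 0 < a 0) (hw : ∀ j, w j ∈ Set.Icc 0 L)
    (hL : L ≤ ∑' j, a j * w j) : L ≤ w 0 := by
  have hsum : Summable fun j => a j * w j :=
    (ha.mul_right L).of_nonneg_of_le (fun j => mul_nonneg (ha_nonneg j) (hw j).1)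
      fun j => mul_le_mul_of_nonneg_left (hw j).2 (ha_nonneg j)
  have htail : ∑' j, a (j + 1) * w (j + 1) ≤ (∑' j, a (j + 1)) * L := by
    rw [← tsum_mul_right]
    exact (hsum.comp_injective (add_left_injective 1)).tsum_le_tsum
      (fun j => mul_le_mul_of_nonneg_left (hw _).2 (ha_nonneg _))
      ((ha.comp_injective (add_left_injective 1)).mul_right L)
  rw [hsum.tsum_eq_zero_add] at hL
  rw [ha.tsum_eq_zero_add] at ha_tsum
  nlinarith [(hw 0).1, (hw 0).2]

theorem tendsto_zero_of_renewal {u a r : ℕ → ℝ} (hu : ∀ n, u n ∈ Set.Icc (0 : ℝ) 1)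
    (ha_nonneg : ∀ j, 0 ≤ a j) (ha : Summable a) (ha_tsum : ∑' j, a j ≤ 1) (ha_zero : 0 < a 0)
    (hr_nonneg : ∀ n, 0 ≤ r n) (hr : ¬ Summable r)
    (hrenewal : ∀ n, u (n + 1) = ∑ j ∈ range (n + 1), a j * u (n - j))
    (hlast : ∀ n, ∑ j ∈ range (n + 1), u (n - j) * r j = 1) :
    Tendsto u atTop (𝓝 0) := by
  set L := limsup u atTop
  obtain ⟨n, v, hn, hv, hv0, hvL⟩ := exists_tendsto_shifts_limsup hu
  have hv_renewal : ∀ i, v i = ∑' j, a j * v (i + 1 + j) := by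
    intro i
    refine tendsto_nhds_unique (hv i) ((tendsto_sum_range_mul_of_tendsto ha
      (fun n => abs_le.2 ⟨by linarith [(hu n).1], (hu n).2⟩)
      ((tendsto_sub_atTop_nat (i + 1)).comp hn) fun j => ?_).congr' ?_)
    · simpa [Nat.sub_sub, add_assoc] using hv (i + 1 + j)
    · filter_upwards [hn.eventually_gt_atTop i] with k hk
      rw [Function.comp_apply, ← hrenewal]
      congr 1
      omega
  have hconst : ∀ i, v i = L := by
    intro i
    induction i with
    | zero => exact hv0
    | succ i ih =>
      refine le_antisymm (hvL _).2 ?_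
      simpa using le_apply_zero_of_le_tsum_mul ha_nonneg ha ha_tsum ha_zero
        (w := fun j => v (i + 1 + j)) (fun j => hvL _) (by rw [← hv_renewal, ih])
  have hbound : ∀ J, L * ∑ j ∈ range J, r j ≤ 1 := by
    intro J
    rw [mul_sum]
    refine le_of_tendsto (tendsto_finsetSum _ fun j _ => hconst j ▸ (hv j).mul_const (r j)) ?_
    filter_upwards [hn.eventually_ge_atTop J] with k hk
    calc ∑ j ∈ range J, u (n k - j) * r j ≤ ∑ j ∈ range (n k + 1), u (n k - j) * r j :=
          sum_le_sum_of_subset_of_nonneg (range_subset_range.2 (by omega))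
            fun j _ _ => mul_nonneg (hu _).1 (hr_nonneg j)
      _ = 1 := hlast _
  have hL : L ≤ 0 := by
    by_contra! hL
    exact hr (summable_of_sum_range_le hr_nonneg fun J => (le_div_iff₀' hL).2 (hbound J))
  refine tendsto_order.2 ⟨fun b hb => .of_forall fun n => hb.trans_le (hu n).1, fun b hb => ?_⟩
  exact eventually_lt_of_limsup_lt (hL.trans_lt hb) (isBoundedUnder_of ⟨1, fun n => (hu n).2⟩)

def pathPrefix (n : ℕ) (ω : ℕ → ℕ) : Fin (n + 1) → ℕ := fun i => ω i

lemma measurable_pathPrefix (n : ℕ) : Measurable (pathPrefix n) :=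
  measurable_pi_lambda _ fun i => measurable_pi_apply (i : ℕ)

lemma T0_le_tsum_indicator (ω : ℕ → ℕ) :
    T0 ω ≤ ∑' n, {ω : ℕ → ℕ | ∀ i < n, ω (i + 1) ≠ 0}.indicator 1 ω := by
  classical
  by_cases h : ∃ i, 0 < i ∧ ω i = 0
  · have hmem : ∀ n < Nat.find h, ω ∈ {ω : ℕ → ℕ | ∀ i < n, ω (i + 1) ≠ 0} :=
      fun n hn i hi hω => Nat.find_min h (by omega) ⟨i.succ_pos, hω⟩
    calc T0 ω ≤ Nat.find h := sInf_le ⟨_, (Nat.find_spec h).1, (Nat.find_spec h).2, rfl⟩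
      _ = ∑ n ∈ range (Nat.find h), {ω : ℕ → ℕ | ∀ i < n, ω (i + 1) ≠ 0}.indicator 1 ω := by
        rw [sum_congr rfl fun n hn => Set.indicator_of_mem (hmem n (mem_range.1 hn)) _]
        simp
      _ ≤ _ := ENNReal.sum_le_tsum _
  · push Not at h
    have hmem : ∀ n, ω ∈ {ω : ℕ → ℕ | ∀ i < n, ω (i + 1) ≠ 0} :=
      fun n i _ => h (i + 1) i.succ_pos
    simp [Set.indicator_of_mem (hmem _)]

lemma T0_eq_top_of_forall_ne_zero {ω : ℕ → ℕ} (h : ∀ i, ω i ≠ 0) : T0 ω = ⊤ := by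
  rw [T0, sInf_eq_top]
  rintro _ ⟨i, -, hi, -⟩
  exact (h i hi).elim

namespace MCNat

variable (M : MCNat)

lemma measure_pathPrefix_preimage_singleton (k n : ℕ) (a : Fin (n + 1) → ℕ) :
    M.ℙ k (pathPrefix n ⁻¹' {a}) =
      if a 0 = k then ∏ i : Fin n, M.p (a i.castSucc) (a i.succ) else 0 := by
  have hcyl : pathPrefix n ⁻¹' {a} = {ω | ∀ i ≤ n, ω i = a (Fin.ofNat (n + 1) i)} := by
    ext ω
    simp only [Set.mem_preimage, Set.mem_singleton_iff, Set.mem_ofPred_eq, funext_iff, pathPrefix]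
    refine ⟨fun h i hi => ?_, fun h i => by simpa using h i i.is_le⟩
    convert h ⟨i, by omega⟩ using 2
    ext
    simpa using Nat.mod_eq_of_lt (Nat.lt_succ_of_le hi)
  rw [hcyl, M.fdd k n (fun i => a (Fin.ofNat (n + 1) i)), ← Fin.prod_univ_eq_prod_range]
  congr 2
  ext i
  congr 2 <;> ext <;> simp

lemma measure_pathPrefix_preimage (k n : ℕ) (S : Set (Fin (n + 1) → ℕ)) :
    M.ℙ k (pathPrefix n ⁻¹' S) = ∑' a, S.indicator
      (fun a => if a 0 = k then ∏ i : Fin n, M.p (a i.castSucc) (a i.succ) else 0) a := by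
  rw [← tsum_measure_preimage_singleton S.to_countable
      fun a _ => measurable_pathPrefix n (measurableSet_singleton a),
    _root_.tsum_subtype S fun a => M.ℙ k (pathPrefix n ⁻¹' {a})]
  simp only [measure_pathPrefix_preimage_singleton]

lemma measure_forall_mem_and_mem_eq_kernelIter (A B : Set ℕ) (k n : ℕ) :
    M.ℙ k {ω | (∀ i < n, ω (i + 1) ∈ A) ∧ ω n ∈ B} =
      kernelIter (fun x => A.indicator (M.p x)) (B.indicator 1) n k := by
  classical
  set S : Set (Fin (n + 1) → ℕ) := {a | (∀ i : Fin n, a i.succ ∈ A) ∧ a (Fin.last n) ∈ B}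
  have hS : {ω | (∀ i < n, ω (i + 1) ∈ A) ∧ ω n ∈ B} = pathPrefix n ⁻¹' S := by
    ext ω
    simp [S, pathPrefix, Fin.forall_iff]
  rw [hS, measure_pathPrefix_preimage, ← tsum_path_eq_kernelIter]
  refine tsum_congr fun a => ?_
  by_cases ha : a ∈ S
  · simp [Set.indicator_of_mem ha, ha.1, ha.2]
  · rw [Set.indicator_of_notMem ha]
    simp only [S, Set.mem_ofPred_eq, not_and_or, not_forall] at ha
    rcases ha with ⟨i, hi⟩ | hB
    · have : ∏ i : Fin n, A.indicator (M.p (a i.castSucc)) (a i.succ) = 0 :=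
        Finset.prod_eq_zero (Finset.mem_univ i) (Set.indicator_of_notMem hi _)
      simp [this]
    · simp [hB]

def transition (n k l : ℕ) : ℝ≥0∞ := kernelIter M.p (Pi.single l 1) n k

def taboo (x y : ℕ) : ℝ≥0∞ := if y = 0 then 0 else M.p x y

def survival (n k : ℕ) : ℝ≥0∞ := kernelIter M.taboo 1 n k

/-- `M.firstPassage j k` is the probability, started from `k`, that the first visit to `0` after
time `0` happens at time `j + 1`. -/
def firstPassage (j k : ℕ) : ℝ≥0∞ := kernelIter M.taboo (fun y => M.p y 0) j k

lemma transition_zero (k l : ℕ) : M.transition 0 k l = (Pi.single l 1 : ℕ → ℝ≥0∞) k := rfl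

lemma transition_succ (n k l : ℕ) :
    M.transition (n + 1) k l = ∑' y, M.p k y * M.transition n y l := rfl

lemma survival_zero (k : ℕ) : M.survival 0 k = 1 := rfl

lemma survival_succ (n k : ℕ) : M.survival (n + 1) k = ∑' y, M.taboo k y * M.survival n y := rfl

lemma firstPassage_zero (k : ℕ) : M.firstPassage 0 k = M.p k 0 := rfl

lemma firstPassage_succ (j k : ℕ) :
    M.firstPassage (j + 1) k = ∑' y, M.taboo k y * M.firstPassage j y := rfl

lemma measure_coord_eq_transition (k n l : ℕ) : M.ℙ k {ω | ω n = l} = M.transition n k l := by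
  simpa [transition] using M.measure_forall_mem_and_mem_eq_kernelIter Set.univ {l} k n

lemma measure_avoid_zero_eq_survival (k n : ℕ) :
    M.ℙ k {ω | ∀ i < n, ω (i + 1) ≠ 0} = M.survival n k := by
  have htaboo : (fun x => ({0}ᶜ : Set ℕ).indicator (M.p x)) = M.taboo := by
    ext x y
    by_cases hy : y = 0 <;> simp [taboo, hy]
  simpa [htaboo, survival] using M.measure_forall_mem_and_mem_eq_kernelIter {0}ᶜ Set.univ k n

lemma tsum_p_mul_eq_add_tsum_taboo_mul (k : ℕ) (f : ℕ → ℝ≥0∞) :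
    ∑' y, M.p k y * f y = M.p k 0 * f 0 + ∑' y, M.taboo k y * f y := by
  rw [ENNReal.tsum_eq_add_tsum_ite 0]
  congr 1
  refine tsum_congr fun y => ?_
  by_cases hy : y = 0 <;> simp [taboo, hy]

lemma transition_le_one (n k l : ℕ) : M.transition n k l ≤ 1 :=
  kernelIter_le_one _ _ (fun x => (M.p_sum x).le) (fun x => by by_cases hx : x = l <;> simp [hx])
    n k

lemma transition_one (k l : ℕ) : M.transition 1 k l = M.p k l := by
  rw [transition_succ, tsum_eq_single l fun y hy => by simp [transition_zero, hy]]
  simp [transition_zero]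

lemma transition_mul_le_transition_add (n m k l x : ℕ) :
    M.transition n k l * M.transition m l x ≤ M.transition (n + m) k x := by
  rw [transition, transition, transition, add_comm, kernelIter_add]
  exact kernelIter_single_mul_le _ _ l n k

lemma survival_eq_survival_succ_add (n k : ℕ) :
    M.survival n k = M.survival (n + 1) k + M.firstPassage n k := by
  induction n generalizing k with
  | zero =>
    rw [survival_zero, survival_succ, firstPassage_zero, ← M.p_sum k]
    simpa [survival_zero, add_comm] using M.tsum_p_mul_eq_add_tsum_taboo_mul k 1
  | succ n ih =>
    rw [survival_succ, survival_succ (n := n + 1), firstPassage_succ]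
    simp only [ih, mul_add, ENNReal.tsum_add]

lemma survival_add_sum_firstPassage (n k : ℕ) :
    M.survival n k + ∑ j ∈ range n, M.firstPassage j k = 1 := by
  induction n with
  | zero => simp [survival_zero]
  | succ n ih =>
    rw [sum_range_succ, ← add_assoc, add_right_comm, ← survival_eq_survival_succ_add, ih]

lemma sum_firstPassage_le_one (n k : ℕ) : ∑ j ∈ range n, M.firstPassage j k ≤ 1 :=
  (M.survival_add_sum_firstPassage n k).symm ▸ le_add_self

lemma survival_le_one (n k : ℕ) : M.survival n k ≤ 1 :=
  (M.survival_add_sum_firstPassage n k).symm ▸ le_self_add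

lemma firstPassage_le_one (j k : ℕ) : M.firstPassage j k ≤ 1 :=
  (single_le_sum (fun _ _ => zero_le) (self_mem_range_succ j)).trans
    (M.sum_firstPassage_le_one (j + 1) k)

lemma transition_succ_eq_sum_antidiagonal (n k : ℕ) :
    M.transition (n + 1) k 0 =
      ∑ ij ∈ antidiagonal n, M.firstPassage ij.1 k * M.transition ij.2 0 0 := by
  induction n generalizing k with
  | zero =>
    rw [transition_one]
    simp [firstPassage_zero, transition_zero]
  | succ n ih =>
    rw [transition_succ, tsum_p_mul_eq_add_tsum_taboo_mul, Nat.sum_antidiagonal_succ,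
      ← firstPassage_zero]
    simp only [ih, mul_sum, firstPassage_succ, ← ENNReal.tsum_mul_right, mul_assoc]
    rw [Summable.tsum_finsetSum fun _ _ => ENNReal.summable]

lemma sum_antidiagonal_transition_mul_survival (n : ℕ) :
    ∑ ij ∈ antidiagonal n, M.transition ij.1 0 0 * M.survival ij.2 0 = 1 := by
  induction n with
  | zero => simp [transition_zero, survival_zero]
  | succ n ih =>
    rw [Nat.sum_antidiagonal_succ', transition_succ_eq_sum_antidiagonal,
      ← Nat.sum_antidiagonal_swap, ← ih, survival_zero, mul_one, ← sum_add_distrib]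
    refine sum_congr rfl fun ij _ => ?_
    rw [survival_eq_survival_succ_add _ ij.2]
    simp only [Prod.fst_swap, Prod.snd_swap]
    ring

lemma ET0_le_tsum_survival (k : ℕ) : ET0 M k ≤ ∑' n, M.survival n k := by
  have hmeas : ∀ n, MeasurableSet {ω : ℕ → ℕ | ∀ i < n, ω (i + 1) ≠ 0} := by
    intro n
    measurability
  calc ET0 M k ≤ ∫⁻ ω, ∑' n, {ω : ℕ → ℕ | ∀ i < n, ω (i + 1) ≠ 0}.indicator 1 ω ∂M.ℙ k :=
        lintegral_mono T0_le_tsum_indicator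
    _ = ∑' n, M.survival n k := by
        rw [lintegral_tsum fun n => (measurable_one.indicator (hmeas n)).aemeasurable]
        simp only [lintegral_indicator_one (hmeas _), measure_avoid_zero_eq_survival]

lemma exists_transition_pos (l : ℕ) (h : 0 < M.ℙ l {ω | T0 ω < ⊤}) :
    ∃ m, 0 < M.transition m l 0 := by
  by_contra! hzero
  have hsub : {ω : ℕ → ℕ | T0 ω < ⊤} ⊆ ⋃ m, {ω | ω m = 0} := by
    intro ω hω
    by_contra hne
    simp only [Set.mem_iUnion, Set.mem_ofPred_eq, not_exists] at hne
    exact hω.ne (T0_eq_top_of_forall_ne_zero hne)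
  refine h.ne' (measure_mono_null hsub (measure_iUnion_null fun m => ?_))
  rw [measure_coord_eq_transition]
  exact le_antisymm (hzero m) zero_le

lemma transition_ne_top (n k l : ℕ) : M.transition n k l ≠ ⊤ :=
  ne_top_of_le_ne_top one_ne_top (M.transition_le_one n k l)

lemma firstPassage_ne_top (j k : ℕ) : M.firstPassage j k ≠ ⊤ :=
  ne_top_of_le_ne_top one_ne_top (M.firstPassage_le_one j k)

lemma survival_ne_top (n k : ℕ) : M.survival n k ≠ ⊤ :=
  ne_top_of_le_ne_top one_ne_top (M.survival_le_one n k)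

lemma tsum_firstPassage_le_one (k : ℕ) : ∑' j, M.firstPassage j k ≤ 1 :=
  ENNReal.tsum_le_of_sum_range_le (M.sum_firstPassage_le_one · k)

lemma summable_toReal_firstPassage (k : ℕ) : Summable fun j => (M.firstPassage j k).toReal :=
  ENNReal.summable_toReal (ne_top_of_le_ne_top one_ne_top (M.tsum_firstPassage_le_one k))

lemma toReal_transition_succ (n k : ℕ) :
    (M.transition (n + 1) k 0).toReal =
      ∑ j ∈ range (n + 1), (M.firstPassage j k).toReal * (M.transition (n - j) 0 0).toReal := by
  rw [transition_succ_eq_sum_antidiagonal, Nat.sum_antidiagonal_eq_sum_range_succ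
    (fun i j => M.firstPassage i k * M.transition j 0 0), ENNReal.toReal_sum
    fun j _ => ENNReal.mul_ne_top (M.firstPassage_ne_top _ _) (M.transition_ne_top _ _ _)]
  simp only [ENNReal.toReal_mul]

lemma sum_range_toReal_transition_mul_survival (n : ℕ) :
    ∑ j ∈ range (n + 1), (M.transition (n - j) 0 0).toReal * (M.survival j 0).toReal = 1 := by
  rw [← ENNReal.toReal_one, ← M.sum_antidiagonal_transition_mul_survival n,
    ← Nat.sum_antidiagonal_swap]
  simp only [Prod.fst_swap, Prod.snd_swap]
  rw [Nat.sum_antidiagonal_eq_sum_range_succ (fun i j => M.transition j 0 0 * M.survival i 0),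
    ENNReal.toReal_sum
      fun j _ => ENNReal.mul_ne_top (M.transition_ne_top _ _ _) (M.survival_ne_top _ _)]
  simp only [ENNReal.toReal_mul]

lemma toReal_transition_mem_Icc (n k l : ℕ) : (M.transition n k l).toReal ∈ Set.Icc (0 : ℝ) 1 :=
  ⟨toReal_nonneg, by simpa using ENNReal.toReal_mono one_ne_top (M.transition_le_one n k l)⟩

lemma tendsto_toReal_transition_zero_zero (hp : M.p 0 0 ≠ 0)
    (hsurv : ∑' n, M.survival n 0 = ⊤) :
    Tendsto (fun n => (M.transition n 0 0).toReal) atTop (𝓝 0) := by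
  have ha_tsum : ∑' j, (M.firstPassage j 0).toReal ≤ 1 := by
    rw [← ENNReal.tsum_toReal_eq (M.firstPassage_ne_top · 0)]
    simpa using ENNReal.toReal_mono one_ne_top (M.tsum_firstPassage_le_one 0)
  have hr : ¬ Summable fun n => (M.survival n 0).toReal := by
    intro hsum
    have := ENNReal.ofReal_tsum_of_nonneg (fun n => toReal_nonneg) hsum
    simp only [ENNReal.ofReal_toReal (M.survival_ne_top _ 0), hsurv] at this
    exact ENNReal.ofReal_ne_top this
  exact tendsto_zero_of_renewal (M.toReal_transition_mem_Icc · 0 0) (fun _ => toReal_nonneg)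
    (M.summable_toReal_firstPassage 0) ha_tsum
    (ENNReal.toReal_pos (M.firstPassage_zero 0 ▸ hp) (M.firstPassage_ne_top 0 0))
    (fun _ => toReal_nonneg) hr (M.toReal_transition_succ · 0)
    M.sum_range_toReal_transition_mul_survival

lemma tendsto_transition_to_zero (hu : Tendsto (fun n => (M.transition n 0 0).toReal) atTop (𝓝 0))
    (k : ℕ) : Tendsto (fun n => M.transition n k 0) atTop (𝓝 0) := by
  rw [← ENNReal.tendsto_toReal_iff (M.transition_ne_top · k 0) zero_ne_top,
    ← tendsto_add_atTop_iff_nat 1]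
  have := tendsto_sum_range_mul_of_tendsto (M.summable_toReal_firstPassage k)
    (fun n => abs_le.2 ⟨by linarith [(M.toReal_transition_mem_Icc n 0 0).1],
      (M.toReal_transition_mem_Icc n 0 0).2⟩)
    tendsto_id fun j => hu.comp (tendsto_sub_atTop_nat j)
  simpa [M.toReal_transition_succ] using this

lemma tendsto_transition_of_transition_pos
    (h : ∀ k, Tendsto (fun n => M.transition n k 0) atTop (𝓝 0)) {m l : ℕ}
    (hm : 0 < M.transition m l 0) (k : ℕ) :
    Tendsto (fun n => M.transition n k l) atTop (𝓝 0) := by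
  have hdiv : Tendsto (fun n => M.transition (n + m) k 0 / M.transition m l 0) atTop (𝓝 0) := by
    simpa using ENNReal.Tendsto.div_const ((h k).comp (tendsto_add_atTop_nat m)) (.inr hm.ne')
  refine tendsto_of_tendsto_of_tendsto_of_le_of_le tendsto_const_nhds hdiv (fun n => zero_le)
    fun n => ?_
  exact (ENNReal.le_div_iff_mul_le (.inl hm.ne') (.inl (M.transition_ne_top _ _ _))).2
    (M.transition_mul_le_transition_add n m k l 0)

end MCNat

theorem stmt2_general (M : MCNat)
    (h0 : 0 < M.ℙ 0 {ω | ω 1 = 0})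
    (hT : ET0 M 0 = ⊤) (hret : ∀ l : ℕ, 0 < M.ℙ l {ω | T0 ω < ⊤}) :
    ∀ k l : ℕ, Tendsto (fun n => M.ℙ k {ω | ω n = l}) atTop (nhds 0) := by
  intro k l
  have hp : M.p 0 0 ≠ 0 := by
    rw [← M.transition_one, ← M.measure_coord_eq_transition]
    exact h0.ne'
  have hsurv : ∑' n, M.survival n 0 = ⊤ := top_unique (hT ▸ M.ET0_le_tsum_survival 0)
  obtain ⟨m, hm⟩ := M.exists_transition_pos l (hret l)
  simp only [M.measure_coord_eq_transition]
  exact M.tendsto_transition_of_transition_pos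
    (M.tendsto_transition_to_zero (M.tendsto_toReal_transition_zero_zero hp hsurv)) hm k

/-- If `𝔼_0(T₀) = ∞` and `ℙ_l(T₀ < ∞) > 0` for every `l`, then for every initial state `k`
the chain tends to `∞` in probability: `ℙ_k(Z_n = l) → 0` for every `l`. -/
theorem stmt2 (M : MCNat)
    (h0 : 0 < M.ℙ 0 {ω | ω 1 = 0}) (h1 : M.ℙ 0 {ω | ω 1 = 0} < 1)
    (hT : ET0 M 0 = ⊤) (hret : ∀ l : ℕ, 0 < M.ℙ l {ω | T0 ω < ⊤}) :
    ∀ k l : ℕ, Tendsto (fun n => M.ℙ k {ω | ω n = l}) atTop (nhds 0) :=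
  stmt2_general M h0 hT hret

end
end
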